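/- Assume (RDQ) holds. The kernel K(z,w) := (ν/π)ⁿ e^{ν⟨z,w⟩} ∑_{γ∈Γ} χ(γ) e^{−(ν/2)|γ|² + ν(⟨z,γ⟩ − conj(⟨w,γ⟩))} satisfies, for every γ₁ ∈ Γ and z, w ∈ ℂⁿ, K(z+γ₁, w) = χ(γ₁) e^{(ν/2)|γ₁|² + ν⟨z,γ₁⟩} K(z,w). In particular, z ↦ K(z,w) satisfies the functional equation defining holomorphic (Γ,χ)-automorphic functions of magnitude ν. -/
import Mathlib

open MeasureTheory Complex

noncomputable section

/-- Hermitian form ⟨z,w⟩ = ∑ zⱼ conj(wⱼ) on ℂⁿ. -/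
def herm {n : ℕ} (z w : Fin n → ℂ) : ℂ := ∑ j, z j * (starRingEnd ℂ) (w j)

/-- Symplectic form ω(z,w) = Im⟨z,w⟩. -/
def symp {n : ℕ} (z w : Fin n → ℂ) : ℝ := (herm z w).im

/-- Squared Euclidean norm |z|². -/
def absq {n : ℕ} (z : Fin n → ℂ) : ℝ := ∑ j, Complex.normSq (z j)

/-- The (Γ,χ)-periodized Bargmann–Fock kernel
K(z,w) = (ν/π)ⁿ e^{ν⟨z,w⟩} ∑_{γ∈Γ} χ(γ) e^{-(ν/2)|γ|² + ν(⟨z,γ⟩ - conj⟨w,γ⟩)}. -/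
def thetaKer {n : ℕ} (ν : ℝ) (Γ : AddSubgroup (Fin n → ℂ)) (χ : Γ → ℂ)
    (z w : Fin n → ℂ) : ℂ :=
  ((ν / Real.pi) ^ n : ℝ) * Complex.exp ((ν : ℂ) * herm z w) *
    ∑' γ : Γ, χ γ * Complex.exp (((-(ν / 2) * absq (γ : Fin n → ℂ) : ℝ) : ℂ) +
      (ν : ℂ) * (herm z (γ : Fin n → ℂ) - (starRingEnd ℂ) (herm w (γ : Fin n → ℂ))))

lemma herm_add_left {n : ℕ} (a b w : Fin n → ℂ) : herm (a + b) w = herm a w + herm b w := by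
  simp [herm, add_mul, Finset.sum_add_distrib]

lemma herm_add_right {n : ℕ} (z a b : Fin n → ℂ) : herm z (a + b) = herm z a + herm z b := by
  simp [herm, mul_add, Finset.sum_add_distrib]

lemma conj_herm {n : ℕ} (z w : Fin n → ℂ) : (starRingEnd ℂ) (herm z w) = herm w z := by
  simp [herm, map_sum, mul_comm]

lemma herm_self {n : ℕ} (z : Fin n → ℂ) : herm z z = (absq z : ℂ) := by
  simp [herm, absq, Complex.mul_conj]

/-- Automorphy of the periodized kernel in the first variable:
K(z+γ₁, w) = χ(γ₁) e^{(ν/2)|γ₁|² + ν⟨z,γ₁⟩} K(z,w). -/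
theorem stmt_10 {n : ℕ} (ν : ℝ) (hν : 0 < ν) (Γ : AddSubgroup (Fin n → ℂ))
    (χ : Γ → ℂ) (hχ : ∀ γ, ‖χ γ‖ = 1)
    (hRDQ : ∀ γ₁ γ₂ : Γ, χ (γ₁ + γ₂) = χ γ₁ * χ γ₂ *
      Complex.exp (Complex.I * ν * symp (γ₁ : Fin n → ℂ) (γ₂ : Fin n → ℂ)))
    (hsum : ∀ z w : Fin n → ℂ, Summable fun γ : Γ =>
      χ γ * Complex.exp (((-(ν / 2) * absq (γ : Fin n → ℂ) : ℝ) : ℂ) +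
        (ν : ℂ) * (herm z (γ : Fin n → ℂ) - (starRingEnd ℂ) (herm w (γ : Fin n → ℂ))))) :
    ∀ (γ₁ : Γ) (z w : Fin n → ℂ),
      thetaKer ν Γ χ (z + (γ₁ : Fin n → ℂ)) w =
        χ γ₁ * Complex.exp (((ν / 2 * absq (γ₁ : Fin n → ℂ) : ℝ) : ℂ) +
          (ν : ℂ) * herm z (γ₁ : Fin n → ℂ)) * thetaKer ν Γ χ z w := by
  intro γ₁ z w
  set γ₁v : Fin n → ℂ := (γ₁ : Fin n → ℂ) with hγ₁v
  set d : ℂ := χ γ₁ * Complex.exp (((ν / 2 * absq γ₁v : ℝ) : ℂ) +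
      (ν : ℂ) * herm z γ₁v - (ν : ℂ) * herm γ₁v w) with hd
  have key : ∀ γ : Γ,
      χ (γ + γ₁) * Complex.exp (((-(ν / 2) * absq ((γ + γ₁ : Γ) : Fin n → ℂ) : ℝ) : ℂ) +
        (ν : ℂ) * (herm (z + γ₁v) ((γ + γ₁ : Γ) : Fin n → ℂ) -
          (starRingEnd ℂ) (herm w ((γ + γ₁ : Γ) : Fin n → ℂ)))) =
      d * (χ γ * Complex.exp (((-(ν / 2) * absq (γ : Fin n → ℂ) : ℝ) : ℂ) +
        (ν : ℂ) * (herm z (γ : Fin n → ℂ) - (starRingEnd ℂ) (herm w (γ : Fin n → ℂ))))) := by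
    intro γ
    have hcoe : ((γ + γ₁ : Γ) : Fin n → ℂ) = (γ : Fin n → ℂ) + γ₁v := rfl
    have habs : ((absq ((γ : Fin n → ℂ) + γ₁v) : ℝ) : ℂ) =
        ((absq (γ : Fin n → ℂ) : ℝ) : ℂ) + ((absq γ₁v : ℝ) : ℂ) +
          herm (γ : Fin n → ℂ) γ₁v + herm γ₁v (γ : Fin n → ℂ) := by
      rw [← herm_self, herm_add_left, herm_add_right, herm_add_right, herm_self, herm_self]
      ring
    have hsy : Complex.I * ((symp (γ : Fin n → ℂ) γ₁v : ℝ) : ℂ) =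
        (herm (γ : Fin n → ℂ) γ₁v - herm γ₁v (γ : Fin n → ℂ)) / 2 := by
      have h2 := Complex.sub_conj (herm (γ : Fin n → ℂ) γ₁v)
      rw [conj_herm] at h2
      push_cast at h2
      rw [symp]
      linear_combination -h2 / 2
    have hexp : Complex.exp (Complex.I * (ν : ℂ) * ((symp (γ : Fin n → ℂ) γ₁v : ℝ) : ℂ)) *
        Complex.exp (((-(ν / 2) * absq ((γ : Fin n → ℂ) + γ₁v) : ℝ) : ℂ) +
          (ν : ℂ) * (herm (z + γ₁v) ((γ : Fin n → ℂ) + γ₁v) -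
            (starRingEnd ℂ) (herm w ((γ : Fin n → ℂ) + γ₁v)))) =
        Complex.exp (((ν / 2 * absq γ₁v : ℝ) : ℂ) + (ν : ℂ) * herm z γ₁v -
            (ν : ℂ) * herm γ₁v w) *
        Complex.exp (((-(ν / 2) * absq (γ : Fin n → ℂ) : ℝ) : ℂ) +
          (ν : ℂ) * (herm z (γ : Fin n → ℂ) -
            (starRingEnd ℂ) (herm w (γ : Fin n → ℂ)))) := by
      rw [← Complex.exp_add, ← Complex.exp_add]
      congr 1
      simp only [map_add, conj_herm, herm_add_left, herm_add_right, herm_self]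
      push_cast
      push_cast at habs hsy
      linear_combination (ν : ℂ) * hsy - ((ν : ℂ) / 2) * habs
    rw [hRDQ γ γ₁, hd, hcoe]
    linear_combination χ γ * χ γ₁ * hexp
  have hre : (∑' γ : Γ, χ γ * Complex.exp (((-(ν / 2) * absq (γ : Fin n → ℂ) : ℝ) : ℂ) +
      (ν : ℂ) * (herm (z + γ₁v) (γ : Fin n → ℂ) -
        (starRingEnd ℂ) (herm w (γ : Fin n → ℂ))))) =
      d * ∑' γ : Γ, χ γ * Complex.exp (((-(ν / 2) * absq (γ : Fin n → ℂ) : ℝ) : ℂ) +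
        (ν : ℂ) * (herm z (γ : Fin n → ℂ) - (starRingEnd ℂ) (herm w (γ : Fin n → ℂ)))) := by
    rw [← (Equiv.addRight γ₁).tsum_eq (fun γ : Γ =>
      χ γ * Complex.exp (((-(ν / 2) * absq (γ : Fin n → ℂ) : ℝ) : ℂ) +
        (ν : ℂ) * (herm (z + γ₁v) (γ : Fin n → ℂ) -
          (starRingEnd ℂ) (herm w (γ : Fin n → ℂ)))))]
    rw [← tsum_mul_left]
    exact tsum_congr fun γ => key γ
  unfold thetaKer
  rw [hre, herm_add_left, mul_add, Complex.exp_add, hd]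
  have hcan : Complex.exp ((ν : ℂ) * herm γ₁v w) *
      Complex.exp (((ν / 2 * absq γ₁v : ℝ) : ℂ) + (ν : ℂ) * herm z γ₁v -
        (ν : ℂ) * herm γ₁v w) =
      Complex.exp (((ν / 2 * absq γ₁v : ℝ) : ℂ) + (ν : ℂ) * herm z γ₁v) := by
    rw [← Complex.exp_add]
    congr 1
    ring
  linear_combination ((((ν / Real.pi) ^ n : ℝ) : ℂ) * Complex.exp ((ν : ℂ) * herm z w) *
    χ γ₁ * (∑' γ : Γ, χ γ * Complex.exp (((-(ν / 2) * absq (γ : Fin n → ℂ) : ℝ) : ℂ) +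
      (ν : ℂ) * (herm z (γ : Fin n → ℂ) - (starRingEnd ℂ) (herm w (γ : Fin n → ℂ)))))) * hcan
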